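/- For Bernoulli distributions with parameters p and q where 0 < q < 1, the KL-divergence satisfies KL(Bern(p) || Bern(q)) ≤ (p - q)² / (q(1 - q)). -/
import Mathlib


/-- KL divergence between Bernoulli distributions with parameters `p` and `q`. -/
noncomputable def klBern (p q : ℝ) : ℝ :=
  p * Real.log (p / q) + (1 - p) * Real.log ((1 - p) / (1 - q))

lemma mul_log_div_le (a b : ℝ) (ha : 0 ≤ a) (hb : 0 < b) :
    a * Real.log (a / b) ≤ a * (a / b - 1) := by
  rcases eq_or_lt_of_le ha with h | h
  · simp [← h]
  · exact mul_le_mul_of_nonneg_left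
      (Real.log_le_sub_one_of_pos (div_pos h hb)) ha

/-- For Bernoulli distributions with parameters `p ∈ [0,1]` and `q ∈ (0,1)`,
`KL(Bern(p) ‖ Bern(q)) ≤ (p - q)² / (q (1 - q))`. -/
theorem klBern_le_sq_div (p q : ℝ) (hp0 : 0 ≤ p) (hp1 : p ≤ 1)
    (hq0 : 0 < q) (hq1 : q < 1) :
    klBern p q ≤ (p - q) ^ 2 / (q * (1 - q)) := by
  have h1 := mul_log_div_le p q hp0 hq0
  have h2 := mul_log_div_le (1 - p) (1 - q) (by linarith) (by linarith)
  have hq1' : (0:ℝ) < 1 - q := by linarith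
  have key : p * (p / q - 1) + (1 - p) * ((1 - p) / (1 - q) - 1)
      = (p - q) ^ 2 / (q * (1 - q)) := by
    field_simp
    ring
  unfold klBern
  linarith [h1, h2, key.ge]
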